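/- Representation formula for the one-dimensional Helmholtz scattering problem: the function u is twice continuously differentiable on ℝ and satisfies −u″(x) − k² u(x) = f(x) for all x ∈ ℝ; moreover u′(x) = ik u(x) for all x ≥ R and u′(x) = −ik u(x) for all x ≤ −R, so u is outgoing and satisfies the Sommerfeld radiation condition. -/

import Mathlib

open MeasureTheory

/-!
With `a = ik`, write `usol k f = -(L + W) / (2a)`, where `L x = e^{-ax} ∫_x^∞ e^{at} f t dt` and
`W x = e^{ax} ∫_{-∞}^x e^{-at} f t dt`. The fundamental theorem of calculus gives `L' = -aL - f` and
`W' = aW + f`, so the `f`-terms cancel in `u' = (L - W)/2`, and differentiating once more gives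
`u'' = -a(L + W)/2 - f = a²u - f`. To the right of the support of `f` the wave `L` vanishes, and
to its left `W` does, which leaves `u' = ±a u` there.
-/

noncomputable section

def usol (k : ℝ) (f : ℝ → ℂ) (x : ℝ) : ℂ :=
  -(1 / (2 * Complex.I * k)) * Complex.exp (-(Complex.I * k * x)) *
      (∫ t in Set.Ioi x, Complex.exp (Complex.I * k * t) * f t)
    - (1 / (2 * Complex.I * k)) * Complex.exp (Complex.I * k * x) *
      (∫ t in Set.Iio x, Complex.exp (-(Complex.I * k * t)) * f t)

section IntegralDeriv

variable {E : Type*} [NormedAddCommGroup E] [NormedSpace ℝ E] [CompleteSpace E]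
  {h : ℝ → E}

theorem hasDerivAt_integral_Iio (hc : Continuous h) (hi : Integrable h) (x : ℝ) :
    HasDerivAt (fun y => ∫ t in Set.Iio y, h t) (h x) x := by
  have hsplit : ∀ y : ℝ, ∫ t in Set.Iio y, h t = (∫ t in Set.Iic 0, h t) + ∫ t in 0..y, h t := by
    intro y
    rw [← integral_Iic_eq_integral_Iio,
      ← intervalIntegral.integral_Iic_sub_Iic hi.integrableOn hi.integrableOn, add_sub_cancel]
  simp only [hsplit]
  exact (intervalIntegral.integral_hasDerivAt_right hi.intervalIntegrable
    (hc.stronglyMeasurableAtFilter volume _) hc.continuousAt).const_add _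

theorem hasDerivAt_integral_Ioi (hc : Continuous h) (hi : Integrable h) (x : ℝ) :
    HasDerivAt (fun y => ∫ t in Set.Ioi y, h t) (-h x) x := by
  have hsplit : ∀ y : ℝ, ∫ t in Set.Ioi y, h t = (∫ t, h t) - ∫ t in Set.Iio y, h t := by
    intro y
    rw [← integral_Iic_eq_integral_Iio,
      ← intervalIntegral.integral_Iic_add_Ioi hi.integrableOn hi.integrableOn, add_sub_cancel_left]
  simp only [hsplit]
  exact (hasDerivAt_integral_Iio hc hi x).const_sub _

end IntegralDeriv

theorem contDiff_two_of_hasDerivAt_deriv {E : Type*} [NormedAddCommGroup E] [NormedSpace ℝ E]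
    {u u'' : ℝ → E} (hu : Differentiable ℝ u) (hu' : ∀ x, HasDerivAt (deriv u) (u'' x) x)
    (hu'' : Continuous u'') : ContDiff ℝ 2 u := by
  rw [show (2 : WithTop ℕ∞) = 1 + 1 from rfl, contDiff_succ_iff_deriv, contDiff_one_iff_deriv,
    funext fun x => (hu' x).deriv]
  exact ⟨hu, by simp, fun x => (hu' x).differentiableAt, hu''⟩

section Waves

variable {f : ℝ → ℂ}

def leftWave (a : ℂ) (f : ℝ → ℂ) (x : ℝ) : ℂ :=
  Complex.exp (-(a * x)) * ∫ t in Set.Ioi x, Complex.exp (a * t) * f t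

def rightWave (a : ℂ) (f : ℝ → ℂ) (x : ℝ) : ℂ :=
  Complex.exp (a * x) * ∫ t in Set.Iio x, Complex.exp (-(a * t)) * f t

theorem hasDerivAt_cexp_mul_ofReal (a : ℂ) (x : ℝ) :
    HasDerivAt (fun y : ℝ => Complex.exp (a * y)) (a * Complex.exp (a * x)) x := by
  simpa [mul_comm] using (((hasDerivAt_id x).ofReal_comp).const_mul a).cexp

theorem hasDerivAt_leftWave (hf : Continuous f) (hfc : HasCompactSupport f) (a : ℂ) (x : ℝ) :
    HasDerivAt (leftWave a f) (-a * leftWave a f x - f x) x := by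
  have hcont : Continuous fun t : ℝ => Complex.exp (a * t) * f t := by fun_prop
  have hint := hcont.integrable_of_hasCompactSupport (μ := volume) hfc.mul_left
  have hexp := hasDerivAt_cexp_mul_ofReal (-a) x
  simp only [neg_mul] at hexp
  refine (hexp.mul (hasDerivAt_integral_Ioi hcont hint x)).congr_deriv ?_
  have hinv : Complex.exp (-(a * x)) * Complex.exp (a * x) = 1 := by
    rw [Complex.exp_neg, inv_mul_cancel₀ (Complex.exp_ne_zero _)]
  rw [leftWave]
  linear_combination (-f x) * hinv

theorem hasDerivAt_rightWave (hf : Continuous f) (hfc : HasCompactSupport f) (a : ℂ) (x : ℝ) :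
    HasDerivAt (rightWave a f) (a * rightWave a f x + f x) x := by
  have hcont : Continuous fun t : ℝ => Complex.exp (-(a * t)) * f t := by fun_prop
  have hint := hcont.integrable_of_hasCompactSupport (μ := volume) hfc.mul_left
  refine ((hasDerivAt_cexp_mul_ofReal a x).mul (hasDerivAt_integral_Iio hcont hint x)).congr_deriv ?_
  have hinv : Complex.exp (-(a * x)) * Complex.exp (a * x) = 1 := by
    rw [Complex.exp_neg, inv_mul_cancel₀ (Complex.exp_ne_zero _)]
  rw [rightWave]
  linear_combination f x * hinv

theorem leftWave_eq_zero {x : ℝ} (hx : Function.support f ⊆ Set.Iic x) (a : ℂ) :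
    leftWave a f x = 0 := by
  rw [leftWave, setIntegral_eq_zero_of_forall_eq_zero, mul_zero]
  intro t ht
  rw [Function.notMem_support.mp fun h => (Set.mem_Iic.mp (hx h)).not_gt ht, mul_zero]

theorem rightWave_eq_zero {x : ℝ} (hx : Function.support f ⊆ Set.Ici x) (a : ℂ) :
    rightWave a f x = 0 := by
  rw [rightWave, setIntegral_eq_zero_of_forall_eq_zero, mul_zero]
  intro t ht
  rw [Function.notMem_support.mp fun h => (Set.mem_Ici.mp (hx h)).not_gt ht, mul_zero]

end Waves

section Usol

variable {k : ℝ} {f : ℝ → ℂ}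

theorem usol_eq_leftWave_add_rightWave (k : ℝ) (f : ℝ → ℂ) :
    usol k f = fun x =>
      -(leftWave (Complex.I * k) f x + rightWave (Complex.I * k) f x) / (2 * Complex.I * k) := by
  funext x
  simp only [usol, leftWave, rightWave]
  ring

theorem hasDerivAt_usol (hk : k ≠ 0) (hf : Continuous f) (hfc : HasCompactSupport f) (x : ℝ) :
    HasDerivAt (usol k f)
      ((leftWave (Complex.I * k) f x - rightWave (Complex.I * k) f x) / 2) x := by
  have hk' : (k : ℂ) ≠ 0 := Complex.ofReal_ne_zero.mpr hk
  rw [usol_eq_leftWave_add_rightWave]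
  refine (((hasDerivAt_leftWave hf hfc _ x).add (hasDerivAt_rightWave hf hfc _ x)).neg.div_const
    _).congr_deriv ?_
  field_simp
  ring

theorem deriv_usol (hk : k ≠ 0) (hf : Continuous f) (hfc : HasCompactSupport f) :
    deriv (usol k f) = fun x =>
      (leftWave (Complex.I * k) f x - rightWave (Complex.I * k) f x) / 2 :=
  funext fun x => (hasDerivAt_usol hk hf hfc x).deriv

theorem hasDerivAt_deriv_usol (hk : k ≠ 0) (hf : Continuous f) (hfc : HasCompactSupport f)
    (x : ℝ) : HasDerivAt (deriv (usol k f)) (-k ^ 2 * usol k f x - f x) x := by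
  have hk' : (k : ℂ) ≠ 0 := Complex.ofReal_ne_zero.mpr hk
  rw [deriv_usol hk hf hfc, usol_eq_leftWave_add_rightWave]
  refine (((hasDerivAt_leftWave hf hfc _ x).sub (hasDerivAt_rightWave hf hfc _ x)).div_const
    2).congr_deriv ?_
  field_simp
  linear_combination (-(k : ℂ) * (leftWave (Complex.I * k) f x + rightWave (Complex.I * k) f x)) *
    Complex.I_sq

theorem deriv_usol_of_support_subset_Iic (hk : k ≠ 0) (hf : Continuous f)
    (hfc : HasCompactSupport f) {x : ℝ} (hx : Function.support f ⊆ Set.Iic x) :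
    deriv (usol k f) x = Complex.I * k * usol k f x := by
  have hk' : (k : ℂ) ≠ 0 := Complex.ofReal_ne_zero.mpr hk
  rw [deriv_usol hk hf hfc, usol_eq_leftWave_add_rightWave]
  dsimp only
  rw [leftWave_eq_zero hx]
  field_simp
  ring

theorem deriv_usol_of_support_subset_Ici (hk : k ≠ 0) (hf : Continuous f)
    (hfc : HasCompactSupport f) {x : ℝ} (hx : Function.support f ⊆ Set.Ici x) :
    deriv (usol k f) x = -(Complex.I * k) * usol k f x := by
  have hk' : (k : ℂ) ≠ 0 := Complex.ofReal_ne_zero.mpr hk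
  rw [deriv_usol hk hf hfc, usol_eq_leftWave_add_rightWave]
  dsimp only
  rw [rightWave_eq_zero hx]
  field_simp
  ring

end Usol

theorem helmholtz_representation_1d_general (k R : ℝ) (f : ℝ → ℂ)
    (hk : 0 < k) (hf : Continuous f)
    (hsupp : Function.support f ⊆ Set.Icc (-R) R) :
    ContDiff ℝ 2 (usol k f) ∧
      (∀ x : ℝ, -deriv (deriv (usol k f)) x - k ^ 2 * usol k f x = f x) ∧
      (∀ x : ℝ, R ≤ x → deriv (usol k f) x = Complex.I * k * usol k f x) ∧
      (∀ x : ℝ, x ≤ -R → deriv (usol k f) x = -(Complex.I * k) * usol k f x) := by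
  have hk0 : k ≠ 0 := hk.ne'
  have hfc : HasCompactSupport f :=
    isCompact_Icc.of_isClosed_subset (isClosed_tsupport f) (closure_minimal hsupp isClosed_Icc)
  have hu : Differentiable ℝ (usol k f) := fun x => (hasDerivAt_usol hk0 hf hfc x).differentiableAt
  refine ⟨contDiff_two_of_hasDerivAt_deriv hu (hasDerivAt_deriv_usol hk0 hf hfc)
      ((continuous_const.mul hu.continuous).sub hf), fun x => ?_, fun x hx => ?_, fun x hx => ?_⟩
  · rw [(hasDerivAt_deriv_usol hk0 hf hfc x).deriv]
    ring
  · exact deriv_usol_of_support_subset_Iic hk0 hf hfc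
      (hsupp.trans (Set.Icc_subset_Iic_self.trans (Set.Iic_subset_Iic.mpr hx)))
  · exact deriv_usol_of_support_subset_Ici hk0 hf hfc
      (hsupp.trans (Set.Icc_subset_Ici_self.trans (Set.Ici_subset_Ici.mpr hx)))

/-- Representation formula for the one-dimensional Helmholtz scattering problem:
`u` is twice continuously differentiable, satisfies `−u″ − k²u = f` on `ℝ`, and
`u′ = iku` for `x ≥ R`, `u′ = −iku` for `x ≤ −R` (outgoing/Sommerfeld condition). -/
theorem helmholtz_representation_1d (k R : ℝ) (f : ℝ → ℂ)
    (hk : 0 < k) (hR : 0 < R) (hf : Continuous f)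
    (hsupp : Function.support f ⊆ Set.Icc (-R) R) :
    ContDiff ℝ 2 (usol k f) ∧
      (∀ x : ℝ, -deriv (deriv (usol k f)) x - k ^ 2 * usol k f x = f x) ∧
      (∀ x : ℝ, R ≤ x → deriv (usol k f) x = Complex.I * k * usol k f x) ∧
      (∀ x : ℝ, x ≤ -R → deriv (usol k f) x = -(Complex.I * k) * usol k f x) :=
  helmholtz_representation_1d_general k R f hk hf hsupp

end
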